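/- On a complete weighted graph, for any f ∈ ℓ²(V,m) with Q^{(N)}(f) < ∞, the cut-off approximations f·η_k converge to f in the form norm ‖·‖_Q; consequently C_0(V) is dense in (D(Q^{(N)}), ‖·‖_Q) and the Neumann and Dirichlet forms coincide: Q^{(N)} = Q^{(D)}. -/
import Mathlib


open scoped BigOperators
open Filter

/-- The Neumann energy `Q^{(N)}(f) = (1/2) ∑_{x,y} μ_{xy} (f y - f x)²`. -/
noncomputable def QN {V : Type*} (μ : V → V → ℝ) (f : V → ℝ) : ℝ :=
  (1 / 2) * ∑' p : V × V, μ p.1 p.2 * (f p.2 - f p.1) ^ 2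

/-- The squared form norm `‖f‖_Q² = ‖f‖²_{ℓ²_m} + Q^{(N)}(f)`. -/
noncomputable def QnormSq {V : Type*} (m : V → ℝ) (μ : V → V → ℝ) (f : V → ℝ) : ℝ :=
  (∑' x, f x ^ 2 * m x) + QN μ f

/-- The carré du champ operator. -/
noncomputable def gam {V : Type*} (m : V → ℝ) (μ : V → V → ℝ) (f g : V → ℝ) (x : V) : ℝ :=
  (1 / (2 * m x)) * ∑' y, μ x y * (f y - f x) * (g y - g x)

/-- On a complete graph, for `f ∈ ℓ²(V,m)` with `Q^{(N)}(f) < ∞`, the cut-offs `f η_k`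
converge to `f` in the form norm; consequently `C_0(V)` is dense in `(D(Q^{(N)}), ‖·‖_Q)`,
i.e. `Q^{(N)} = Q^{(D)}`. -/
theorem stmt5 {V : Type*} (m : V → ℝ) (μ : V → V → ℝ)
    (hm : ∀ x, 0 < m x) (hsym : ∀ x y, μ x y = μ y x)
    (hnn : ∀ x y, 0 ≤ μ x y) (hlf : ∀ x, (Function.support (μ x)).Finite)
    (η : ℕ → V → ℝ)
    (hηfin : ∀ k, (Function.support (η k)).Finite)
    (hηmono : ∀ k x, η k x ≤ η (k + 1) x)
    (hηlim : ∀ x, Tendsto (fun k => η k x) atTop (nhds 1))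
    (hηgam : ∀ k x, 1 ≤ k → gam m μ (η k) (η k) x ≤ 1 / (k : ℝ)) :
    (∀ f : V → ℝ, Summable (fun x => f x ^ 2 * m x) →
      Summable (fun p : V × V => μ p.1 p.2 * (f p.2 - f p.1) ^ 2) →
      Tendsto (fun k => QnormSq m μ (fun x => f x * η k x - f x)) atTop (nhds 0)) ∧
    (∀ f : V → ℝ, Summable (fun x => f x ^ 2 * m x) →
      Summable (fun p : V × V => μ p.1 p.2 * (f p.2 - f p.1) ^ 2) →
      ∃ g : ℕ → V → ℝ, (∀ k, (Function.support (g k)).Finite) ∧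
        Tendsto (fun k => QnormSq m μ (fun x => g k x - f x)) atTop (nhds 0)) := by
  classical
  -- monotonicity in k
  have hmono : ∀ x, Monotone fun k => η k x := fun x =>
    monotone_nat_of_le_succ fun k => hηmono k x
  have hle1 : ∀ k x, η k x ≤ 1 := fun k x =>
    ge_of_tendsto (hηlim x) (eventually_atTop.2 ⟨k, fun j hj => hmono x hj⟩)
  -- uniform bound for (1 - η k y)^2
  set C : ℝ := 1 + ∑ y ∈ (hηfin 0).toFinset, (1 - η 0 y) ^ 2 with hCdef
  have hC0 : 0 ≤ C := by
    have : (0:ℝ) ≤ ∑ y ∈ (hηfin 0).toFinset, (1 - η 0 y) ^ 2 :=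
      Finset.sum_nonneg fun y _ => sq_nonneg _
    linarith
  have hC : ∀ k y, (1 - η k y) ^ 2 ≤ C := by
    intro k y
    have h1 : 0 ≤ 1 - η k y := by linarith [hle1 k y]
    have h2 : 1 - η k y ≤ 1 - η 0 y := by
      have := hmono y (Nat.zero_le k); simp only at this; linarith
    have hsq : (1 - η k y) ^ 2 ≤ (1 - η 0 y) ^ 2 := by nlinarith
    refine hsq.trans ?_
    by_cases hy : y ∈ (hηfin 0).toFinset
    · have h3 : (1 - η 0 y) ^ 2 ≤ ∑ y ∈ (hηfin 0).toFinset, (1 - η 0 y) ^ 2 :=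
        Finset.single_le_sum (f := fun y => (1 - η 0 y) ^ 2)
          (fun y _ => sq_nonneg _) hy
      rw [hCdef]; linarith
    · have h0 : η 0 y = 0 := by
        by_contra h; exact hy ((hηfin 0).mem_toFinset.2 h)
      have h4 : (0:ℝ) ≤ ∑ y ∈ (hηfin 0).toFinset, (1 - η 0 y) ^ 2 :=
        Finset.sum_nonneg fun y _ => sq_nonneg _
      rw [h0, hCdef]; simp only [sub_zero, one_pow]; linarith
  -- main statement (first part)
  have main : ∀ f : V → ℝ, Summable (fun x => f x ^ 2 * m x) →
      Summable (fun p : V × V => μ p.1 p.2 * (f p.2 - f p.1) ^ 2) →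
      Tendsto (fun k => QnormSq m μ (fun x => f x * η k x - f x)) atTop (nhds 0) := by
    intro f hf2 hfQ
    -- ℓ² part
    have hL2 : Tendsto (fun k => ∑' x, (f x * η k x - f x) ^ 2 * m x) atTop (nhds 0) := by
      have := tendsto_tsum_of_dominated_convergence (𝓕 := atTop)
        (f := fun k x => (f x * η k x - f x) ^ 2 * m x) (g := fun _ : V => (0:ℝ))
        (bound := fun x => C * (f x ^ 2 * m x)) (hf2.mul_left C)
        (fun x => by
          have h1 : Tendsto (fun k => η k x - 1) atTop (nhds 0) := by
            simpa using (hηlim x).sub_const 1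
          have h2 : Tendsto (fun k => (f x * η k x - f x) ^ 2 * m x) atTop
              (nhds ((f x * 1 - f x) ^ 2 * m x)) := by
            exact ((((tendsto_const_nhds.mul (hηlim x)).sub tendsto_const_nhds)).pow 2).mul
              tendsto_const_nhds
          simpa using h2)
        (Eventually.of_forall fun k x => by
          have hx : f x * η k x - f x = f x * (η k x - 1) := by ring
          have hb : (f x * η k x - f x) ^ 2 * m x ≤ C * (f x ^ 2 * m x) := by
            rw [hx, mul_pow]
            have h1 : (η k x - 1) ^ 2 ≤ C := by
              have h := hC k x
              have : (η k x - 1) ^ 2 = (1 - η k x) ^ 2 := by ring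
              linarith [this ▸ h]
            calc f x ^ 2 * (η k x - 1) ^ 2 * m x
                = (f x ^ 2 * m x) * (η k x - 1) ^ 2 := by ring
              _ ≤ (f x ^ 2 * m x) * C := mul_le_mul_of_nonneg_left h1
                  (mul_nonneg (sq_nonneg _) (hm x).le)
              _ = C * (f x ^ 2 * m x) := by ring
          have hnn' : 0 ≤ (f x * η k x - f x) ^ 2 * m x :=
            mul_nonneg (sq_nonneg _) (hm x).le
          rw [Real.norm_eq_abs, abs_of_nonneg hnn']
          exact hb)
      simpa using this
    -- energy part
    set a : ℕ → V × V → ℝ := fun k p =>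
      μ p.1 p.2 * (f p.2 - f p.1) ^ 2 * (1 - η k p.2) ^ 2 with hadef
    set b : ℕ → V × V → ℝ := fun k p =>
      μ p.1 p.2 * f p.1 ^ 2 * (η k p.2 - η k p.1) ^ 2 with hbdef
    have ha_nn : ∀ k p, 0 ≤ a k p := fun k p =>
      mul_nonneg (mul_nonneg (hnn _ _) (sq_nonneg _)) (sq_nonneg _)
    have hb_nn : ∀ k p, 0 ≤ b k p := fun k p =>
      mul_nonneg (mul_nonneg (hnn _ _) (sq_nonneg _)) (sq_nonneg _)
    have ha_le : ∀ k p, a k p ≤ C * (μ p.1 p.2 * (f p.2 - f p.1) ^ 2) := by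
      intro k p
      calc a k p = (μ p.1 p.2 * (f p.2 - f p.1) ^ 2) * (1 - η k p.2) ^ 2 := by
            simp only [hadef]
        _ ≤ (μ p.1 p.2 * (f p.2 - f p.1) ^ 2) * C := mul_le_mul_of_nonneg_left (hC k p.2)
            (mul_nonneg (hnn _ _) (sq_nonneg _))
        _ = C * (μ p.1 p.2 * (f p.2 - f p.1) ^ 2) := by ring
    have ha_sum : ∀ k, Summable (a k) := fun k =>
      Summable.of_nonneg_of_le (ha_nn k) (ha_le k) (hfQ.mul_left C)
    -- fiberwise summability of b
    have hb_fiber : ∀ k x, Summable fun y => b k (x, y) := by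
      intro k x
      apply summable_of_finite_support
      apply (hlf x).subset
      intro y hy
      simp only [Function.mem_support] at hy ⊢
      intro h0
      apply hy
      simp [hbdef, h0]
    -- the inner sums in terms of gam
    have hb_inner : ∀ k x, ∑' y, b k (x, y)
        = f x ^ 2 * (2 * m x * gam m μ (η k) (η k) x) := by
      intro k x
      have h1 : ∑' y, b k (x, y) = f x ^ 2 * ∑' y, μ x y * (η k y - η k x) ^ 2 := by
        rw [← tsum_mul_left]
        exact tsum_congr fun y => by simp only [hbdef]; ring
      have h2 : ∑' y, μ x y * (η k y - η k x) ^ 2 = 2 * m x * gam m μ (η k) (η k) x := by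
        unfold gam
        have hmx : (2 * m x) ≠ 0 := by have := hm x; positivity
        rw [← mul_assoc, mul_one_div, div_self hmx, one_mul]
        exact tsum_congr fun y => by ring
      rw [h1, h2]
    have hb_inner_le : ∀ k x, 1 ≤ k → ∑' y, b k (x, y) ≤ (2 / (k:ℝ)) * (f x ^ 2 * m x) := by
      intro k x hk
      rw [hb_inner k x]
      have hg := hηgam k x hk
      have hmx : 0 < 2 * m x := by have := hm x; positivity
      have : 2 * m x * gam m μ (η k) (η k) x ≤ 2 * m x * (1 / k) :=
        mul_le_mul_of_nonneg_left hg hmx.le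
      calc f x ^ 2 * (2 * m x * gam m μ (η k) (η k) x)
          ≤ f x ^ 2 * (2 * m x * (1 / k)) :=
            mul_le_mul_of_nonneg_left this (sq_nonneg _)
        _ = (2 / (k:ℝ)) * (f x ^ 2 * m x) := by ring
    have hb_inner_nn : ∀ k x, 0 ≤ ∑' y, b k (x, y) := fun k x =>
      tsum_nonneg fun y => hb_nn k (x, y)
    have hb_outer_sum : ∀ k, 1 ≤ k → Summable fun x => ∑' y, b k (x, y) := by
      intro k hk
      exact Summable.of_nonneg_of_le (hb_inner_nn k) (fun x => hb_inner_le k x hk)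
        (hf2.mul_left _)
    have hb_sum : ∀ k, 1 ≤ k → Summable (b k) := by
      intro k hk
      refine (summable_prod_of_nonneg (hb_nn k)).2 ⟨hb_fiber k, ?_⟩
      exact hb_outer_sum k hk
    -- B bound
    have hM_nn : 0 ≤ ∑' x, f x ^ 2 * m x :=
      tsum_nonneg fun x => mul_nonneg (sq_nonneg _) (hm x).le
    have hB_le : ∀ k, 1 ≤ k → ∑' p, b k p ≤ (2 / (k:ℝ)) * ∑' x, f x ^ 2 * m x := by
      intro k hk
      rw [Summable.tsum_prod' (hb_sum k hk) (hb_fiber k)]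
      calc ∑' x, ∑' y, b k (x, y) ≤ ∑' x, (2 / (k:ℝ)) * (f x ^ 2 * m x) :=
            Summable.tsum_le_tsum (fun x => hb_inner_le k x hk) (hb_outer_sum k hk)
              (hf2.mul_left _)
        _ = (2 / (k:ℝ)) * ∑' x, f x ^ 2 * m x := tsum_mul_left
    have hB_tendsto : Tendsto (fun k => ∑' p, b k p) atTop (nhds 0) := by
      apply squeeze_zero' (Eventually.of_forall fun k => tsum_nonneg (hb_nn k))
        (eventually_atTop.2 ⟨1, fun k hk => hB_le k hk⟩)
      have := (tendsto_const_div_atTop_nhds_zero_nat 2).mul_const (∑' x, f x ^ 2 * m x)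
      simpa using this
    have hA_tendsto : Tendsto (fun k => ∑' p, a k p) atTop (nhds 0) := by
      have := tendsto_tsum_of_dominated_convergence (𝓕 := atTop)
        (f := a) (g := fun _ : V × V => (0:ℝ))
        (bound := fun p => C * (μ p.1 p.2 * (f p.2 - f p.1) ^ 2)) (hfQ.mul_left C)
        (fun p => by
          have h2 : Tendsto (fun k => a k p) atTop
              (nhds (μ p.1 p.2 * (f p.2 - f p.1) ^ 2 * (1 - 1) ^ 2)) :=
            tendsto_const_nhds.mul (((tendsto_const_nhds.sub (hηlim p.2))).pow 2)
          simpa using h2)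
        (Eventually.of_forall fun k p => by
          rw [Real.norm_eq_abs, abs_of_nonneg (ha_nn k p)]
          exact ha_le k p)
      simpa using this
    -- pointwise bound for the energy of g_k
    have hpt : ∀ k p, μ p.1 p.2 *
        ((f p.2 * η k p.2 - f p.2) - (f p.1 * η k p.1 - f p.1)) ^ 2
        ≤ 2 * a k p + 2 * b k p := by
      intro k p
      have key : ((f p.2 * η k p.2 - f p.2) - (f p.1 * η k p.1 - f p.1)) ^ 2
          ≤ 2 * ((f p.2 - f p.1) ^ 2 * (1 - η k p.2) ^ 2)
            + 2 * (f p.1 ^ 2 * (η k p.2 - η k p.1) ^ 2) := by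
        nlinarith [sq_nonneg ((f p.2 - f p.1) * (1 - η k p.2) - f p.1 * (η k p.2 - η k p.1)),
          sq_nonneg ((f p.2 - f p.1) * (1 - η k p.2) + f p.1 * (η k p.2 - η k p.1))]
      have := mul_le_mul_of_nonneg_left key (hnn p.1 p.2)
      calc μ p.1 p.2 * ((f p.2 * η k p.2 - f p.2) - (f p.1 * η k p.1 - f p.1)) ^ 2
          ≤ μ p.1 p.2 * (2 * ((f p.2 - f p.1) ^ 2 * (1 - η k p.2) ^ 2)
            + 2 * (f p.1 ^ 2 * (η k p.2 - η k p.1) ^ 2)) := this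
        _ = 2 * a k p + 2 * b k p := by simp only [hadef, hbdef]; ring
    have hS_nn : ∀ k, 0 ≤ ∑' p : V × V, μ p.1 p.2 *
        ((f p.2 * η k p.2 - f p.2) - (f p.1 * η k p.1 - f p.1)) ^ 2 := fun k =>
      tsum_nonneg fun p => mul_nonneg (hnn _ _) (sq_nonneg _)
    have hS_le : ∀ k, 1 ≤ k → ∑' p : V × V, μ p.1 p.2 *
        ((f p.2 * η k p.2 - f p.2) - (f p.1 * η k p.1 - f p.1)) ^ 2
        ≤ 2 * ∑' p, a k p + 2 * ∑' p, b k p := by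
      intro k hk
      have hsum2 : Summable fun p => 2 * a k p + 2 * b k p :=
        ((ha_sum k).mul_left 2).add ((hb_sum k hk).mul_left 2)
      have hsum1 : Summable fun p : V × V => μ p.1 p.2 *
          ((f p.2 * η k p.2 - f p.2) - (f p.1 * η k p.1 - f p.1)) ^ 2 :=
        Summable.of_nonneg_of_le (fun p => mul_nonneg (hnn _ _) (sq_nonneg _))
          (hpt k) hsum2
      calc ∑' p : V × V, μ p.1 p.2 *
            ((f p.2 * η k p.2 - f p.2) - (f p.1 * η k p.1 - f p.1)) ^ 2
          ≤ ∑' p, (2 * a k p + 2 * b k p) := Summable.tsum_le_tsum (hpt k) hsum1 hsum2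
        _ = 2 * ∑' p, a k p + 2 * ∑' p, b k p := by
            rw [Summable.tsum_add ((ha_sum k).mul_left 2) ((hb_sum k hk).mul_left 2),
              tsum_mul_left, tsum_mul_left]
    have hS_tendsto : Tendsto (fun k => ∑' p : V × V, μ p.1 p.2 *
        ((f p.2 * η k p.2 - f p.2) - (f p.1 * η k p.1 - f p.1)) ^ 2) atTop (nhds 0) := by
      apply squeeze_zero' (Eventually.of_forall hS_nn)
        (eventually_atTop.2 ⟨1, fun k hk => hS_le k hk⟩)
      have := (hA_tendsto.const_mul 2).add (hB_tendsto.const_mul 2)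
      simpa using this
    have hQN : Tendsto (fun k => QN μ (fun x => f x * η k x - f x)) atTop (nhds 0) := by
      unfold QN
      have := hS_tendsto.const_mul (1/2 : ℝ)
      simpa using this
    have := hL2.add hQN
    simpa [QnormSq] using this
  refine ⟨main, ?_⟩
  intro f hf2 hfQ
  refine ⟨fun k x => f x * η k x, ?_, ?_⟩
  · intro k
    apply (hηfin k).subset
    intro x hx
    simp only [Function.mem_support] at hx ⊢
    intro h0; exact hx (by rw [h0, mul_zero])
  · exact main f hf2 hfQ
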